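/- The function g : ℝ → ℝ defined by g(x) = ∑_{n=1}^∞ n^{−2} sin(2πn²x) is Hölder continuous of index 1/2: there exists a constant C > 0 such that |g(x) − g(y)| ≤ C|x − y|^{1/2} for all x, y ∈ ℝ. -/

import Mathlib

open Filter

/-- Riemann's nondifferentiable function `g(x) = ∑_{n ≥ 1} n⁻² sin(2πn²x)`.
(The `n = 0` term of the `tsum` vanishes, since `sin 0 = 0`.) -/
noncomputable def g (x : ℝ) : ℝ :=
  ∑' n : ℕ, Real.sin (2 * Real.pi * (n : ℝ) ^ 2 * x) / (n : ℝ) ^ 2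

lemma sin_diff_le (a b : ℝ) : |Real.sin a - Real.sin b| ≤ |a - b| := by
  rw [Real.sin_sub_sin, abs_mul, abs_mul, abs_two]
  have h1 : |Real.sin ((a - b) / 2)| ≤ |(a - b) / 2| := Real.abs_sin_le_abs
  have h2 : |Real.cos ((a + b) / 2)| ≤ 1 := Real.abs_cos_le_one _
  have h3 : |(a - b) / 2| = |a - b| / 2 := by rw [abs_div, abs_two]
  nlinarith [abs_nonneg (Real.sin ((a - b) / 2)), abs_nonneg (Real.cos ((a + b) / 2)),
    abs_nonneg (a - b)]

lemma summable_inv_sq : Summable (fun n : ℕ => ((n : ℝ) ^ 2)⁻¹) := by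
  simpa [one_div] using (Real.summable_one_div_nat_pow (p := 2)).2 one_lt_two

lemma summable_f (x : ℝ) :
    Summable (fun n : ℕ => Real.sin (2 * Real.pi * (n : ℝ) ^ 2 * x) / (n : ℝ) ^ 2) := by
  apply Summable.of_norm_bounded summable_inv_sq
  intro n
  rw [Real.norm_eq_abs, abs_div, abs_of_nonneg (by positivity : (0:ℝ) ≤ (n:ℝ)^2), ← one_div]
  gcongr
  exact Real.abs_sin_le_one _

set_option maxHeartbeats 1000000 in
lemma tail_bound (N : ℕ) :
    ∑' n : ℕ, (((n + (N + 1) : ℕ) : ℝ) ^ 2)⁻¹ ≤ 2 / (N + 1) := by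
  have hs : Summable (fun n : ℕ => (((n + (N + 1) : ℕ) : ℝ) ^ 2)⁻¹) :=
    (summable_nat_add_iff (N + 1)).2 summable_inv_sq
  refine Summable.tsum_le_of_sum_le hs fun s => ?_
  have himg : ∑ i ∈ s, (((i + (N + 1) : ℕ) : ℝ) ^ 2)⁻¹
      = ∑ j ∈ s.image (· + (N + 1)), ((j : ℝ) ^ 2)⁻¹ := by
    rw [Finset.sum_image]
    intro a _ b _ hab
    simp only at hab
    omega
  rw [himg]
  calc ∑ j ∈ s.image (· + (N + 1)), ((j : ℝ) ^ 2)⁻¹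
      ≤ ∑ j ∈ Finset.Ioo N (s.sup id + N + 2), ((j : ℝ) ^ 2)⁻¹ := by
        apply Finset.sum_le_sum_of_subset_of_nonneg
        · intro j hj
          simp only [Finset.mem_image] at hj
          obtain ⟨i, hi, rfl⟩ := hj
          have := Finset.le_sup (f := id) hi
          simp only [id] at this
          simp only [Finset.mem_Ioo]
          omega
        · intros; positivity
    _ ≤ 2 / (N + 1) := by
        have := sum_Ioo_inv_sq_le (α := ℝ) N (s.sup id + N + 2)
        simpa using this

lemma summable_min {h : ℝ} (hh : 0 ≤ h) :
    Summable (fun n : ℕ => min (2 * ((n : ℝ) ^ 2)⁻¹) h) :=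
  Summable.of_nonneg_of_le (fun n => le_min (by positivity) hh)
    (fun n => min_le_left _ _) (summable_inv_sq.mul_left 2)

lemma abs_term_le (x y : ℝ) (n : ℕ) :
    |Real.sin (2 * Real.pi * (n : ℝ) ^ 2 * x) / (n : ℝ) ^ 2 -
      Real.sin (2 * Real.pi * (n : ℝ) ^ 2 * y) / (n : ℝ) ^ 2|
      ≤ min (2 * ((n : ℝ) ^ 2)⁻¹) (2 * Real.pi * |x - y|) := by
  rcases Nat.eq_zero_or_pos n with rfl | hn
  · simp [le_min_iff, Real.pi_nonneg, abs_nonneg, mul_nonneg]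
  have hc : (0:ℝ) < (n : ℝ) ^ 2 := by positivity
  rw [div_sub_div_same, abs_div, abs_of_pos hc]
  refine le_min ?_ ?_
  · rw [div_le_iff₀ hc]
    have h1 := Real.abs_sin_le_one (2 * Real.pi * (n:ℝ)^2 * x)
    have h2 := Real.abs_sin_le_one (2 * Real.pi * (n:ℝ)^2 * y)
    calc |Real.sin (2 * Real.pi * (n:ℝ)^2 * x) - Real.sin (2 * Real.pi * (n:ℝ)^2 * y)| ≤ 2 := by
          calc _ ≤ |Real.sin (2 * Real.pi * (n:ℝ)^2 * x)| + |Real.sin (2 * Real.pi * (n:ℝ)^2 * y)| :=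
                abs_sub _ _
            _ ≤ 2 := by linarith
      _ = 2 * ((n:ℝ)^2)⁻¹ * (n:ℝ)^2 := by field_simp
  · rw [div_le_iff₀ hc]
    calc |Real.sin (2 * Real.pi * (n:ℝ)^2 * x) - Real.sin (2 * Real.pi * (n:ℝ)^2 * y)|
        ≤ |2 * Real.pi * (n:ℝ)^2 * x - 2 * Real.pi * (n:ℝ)^2 * y| := sin_diff_le _ _
      _ = 2 * Real.pi * (n:ℝ)^2 * |x - y| := by
          rw [← mul_sub, abs_mul, abs_of_pos (by positivity : (0:ℝ) < 2 * Real.pi * (n:ℝ)^2)]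
      _ = 2 * Real.pi * |x - y| * (n:ℝ)^2 := by ring

lemma gdiff_le (x y : ℝ) :
    |g x - g y| ≤ ∑' n : ℕ, min (2 * ((n : ℝ) ^ 2)⁻¹) (2 * Real.pi * |x - y|) := by
  have hx := summable_f x
  have hy := summable_f y
  have habs : Summable (fun n : ℕ => ‖Real.sin (2 * Real.pi * (n : ℝ) ^ 2 * x) / (n : ℝ) ^ 2 -
          Real.sin (2 * Real.pi * (n : ℝ) ^ 2 * y) / (n : ℝ) ^ 2‖) := by
    simpa only [Real.norm_eq_abs] using (hx.sub hy).abs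
  have e : g x - g y = ∑' n : ℕ, (Real.sin (2 * Real.pi * (n : ℝ) ^ 2 * x) / (n : ℝ) ^ 2 -
          Real.sin (2 * Real.pi * (n : ℝ) ^ 2 * y) / (n : ℝ) ^ 2) := (Summable.tsum_sub hx hy).symm
  have h2 := norm_tsum_le_tsum_norm (f := fun n : ℕ =>
      Real.sin (2 * Real.pi * (n : ℝ) ^ 2 * x) / (n : ℝ) ^ 2 -
          Real.sin (2 * Real.pi * (n : ℝ) ^ 2 * y) / (n : ℝ) ^ 2) habs
  have h3 : |g x - g y| ≤ ∑' n : ℕ, |Real.sin (2 * Real.pi * (n : ℝ) ^ 2 * x) / (n : ℝ) ^ 2 -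
          Real.sin (2 * Real.pi * (n : ℝ) ^ 2 * y) / (n : ℝ) ^ 2| := by
    rw [e]
    simpa only [Real.norm_eq_abs] using h2
  refine h3.trans (Summable.tsum_le_tsum (abs_term_le x y) ?_ (summable_min (by positivity)))
  simpa only [Real.norm_eq_abs] using habs

set_option maxHeartbeats 1000000 in
lemma tsum_min_le {h : ℝ} (hh : 0 ≤ h) (N : ℕ) :
    ∑' n : ℕ, min (2 * ((n : ℝ) ^ 2)⁻¹) h ≤ ((N : ℝ) + 1) * h + 4 / ((N : ℝ) + 1) := by
  have hsm := summable_min hh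
  rw [← Summable.sum_add_tsum_nat_add (N + 1) hsm]
  have hA : ∑ n ∈ Finset.range (N + 1), min (2 * ((n : ℝ) ^ 2)⁻¹) h ≤ ((N : ℝ) + 1) * h := by
    calc ∑ n ∈ Finset.range (N + 1), min (2 * ((n : ℝ) ^ 2)⁻¹) h
        ≤ ∑ _n ∈ Finset.range (N + 1), h := Finset.sum_le_sum fun n _ => min_le_right _ _
      _ = ((N : ℝ) + 1) * h := by
          rw [Finset.sum_const, Finset.card_range, nsmul_eq_mul]
          push_cast; ring
  have hB : ∑' n : ℕ, min (2 * (((n + (N + 1) : ℕ) : ℝ) ^ 2)⁻¹) h ≤ 4 / ((N : ℝ) + 1) := by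
    calc ∑' n : ℕ, min (2 * (((n + (N + 1) : ℕ) : ℝ) ^ 2)⁻¹) h
        ≤ ∑' n : ℕ, 2 * (((n + (N + 1) : ℕ) : ℝ) ^ 2)⁻¹ :=
          Summable.tsum_le_tsum (fun n => min_le_left _ _) ((summable_nat_add_iff (N + 1)).2 hsm)
            ((summable_nat_add_iff (N + 1)).2 (summable_inv_sq.mul_left 2))
      _ = 2 * ∑' n : ℕ, (((n + (N + 1) : ℕ) : ℝ) ^ 2)⁻¹ := tsum_mul_left
      _ ≤ 2 * (2 / ((N : ℝ) + 1)) := by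
          have := tail_bound N
          nlinarith [this]
      _ = 4 / ((N : ℝ) + 1) := by ring
  exact add_le_add hA hB

lemma tsum_min_le' {h : ℝ} (hh : 0 ≤ h) :
    ∑' n : ℕ, min (2 * ((n : ℝ) ^ 2)⁻¹) h ≤ 4 := by
  have htail : ∑' n : ℕ, (((n : ℝ) + 1) ^ 2)⁻¹ ≤ 2 := by
    have := tail_bound 0
    simpa using this
  calc ∑' n : ℕ, min (2 * ((n : ℝ) ^ 2)⁻¹) h
      ≤ ∑' n : ℕ, 2 * ((n : ℝ) ^ 2)⁻¹ :=
        Summable.tsum_le_tsum (fun n => min_le_left _ _) (summable_min hh) (summable_inv_sq.mul_left 2)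
    _ = 2 * ∑' n : ℕ, ((n : ℝ) ^ 2)⁻¹ := tsum_mul_left
    _ ≤ 2 * 2 := by
        have e := Summable.tsum_eq_zero_add summable_inv_sq
        have h0 : ∑' n : ℕ, ((n : ℝ) ^ 2)⁻¹ = ∑' n : ℕ, (((n : ℝ) + 1) ^ 2)⁻¹ := by
          rw [e]; push_cast; simp
        rw [h0]
        linarith
    _ = 4 := by norm_num

/-- Riemann's function is Hölder continuous of index 1/2. -/
theorem stmt_8 :
    ∃ C > (0:ℝ), ∀ x y : ℝ, |g x - g y| ≤ C * |x - y| ^ ((1:ℝ)/2) := by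
  refine ⟨4 * Real.pi + 4, by positivity, fun x y => ?_⟩
  have hh : (0:ℝ) ≤ |x - y| := abs_nonneg _
  rcases eq_or_lt_of_le hh with h0 | h0
  · have hxy : x = y := sub_eq_zero.1 (abs_eq_zero.1 h0.symm)
    subst hxy
    simp [Real.zero_rpow (by norm_num : (1:ℝ)/2 ≠ 0)]
  · rw [← Real.sqrt_eq_rpow]
    have hs : 0 < Real.sqrt |x - y| := Real.sqrt_pos.2 h0
    set s := Real.sqrt |x - y| with hs_def
    have hsq : s * s = |x - y| := Real.mul_self_sqrt hh
    have hπ := Real.pi_pos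
    by_cases hle : |x - y| ≤ 1
    · set N := ⌊1 / s⌋₊ with hN
      have h1 : (1:ℝ) / s < (N : ℝ) + 1 := Nat.lt_floor_add_one _
      have h2 : (N : ℝ) ≤ 1 / s := Nat.floor_le (by positivity)
      have key := (gdiff_le x y).trans (tsum_min_le (by positivity) N)
      refine key.trans ?_
      have ht : (0:ℝ) < (N : ℝ) + 1 := by positivity
      have hts : 1 ≤ ((N : ℝ) + 1) * s := by
        rw [div_lt_iff₀ hs] at h1
        nlinarith
      have h4 : 4 / ((N : ℝ) + 1) ≤ 4 * s := by
        rw [div_le_iff₀ ht]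
        nlinarith
      have hs1 : s ≤ 1 := by nlinarith
      have hNs : ((N : ℝ) + 1) * s ≤ 1 + s := by
        have h2' : (N : ℝ) * s ≤ 1 := by
          rw [← inv_mul_cancel₀ hs.ne']
          exact mul_le_mul_of_nonneg_right (by rwa [one_div] at h2) hs.le
        nlinarith
      have h5 : ((N : ℝ) + 1) * (2 * Real.pi * |x - y|) ≤ 4 * Real.pi * s := by
        have hmul := mul_le_mul_of_nonneg_right hNs
          (by positivity : (0:ℝ) ≤ 2 * Real.pi * s)
        rw [← hsq]
        nlinarith [hmul, mul_nonneg (mul_nonneg hπ.le hs.le) (sub_nonneg.2 hs1)]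
      linarith
    · push_neg at hle
      have hs1 : 1 ≤ s := by nlinarith
      have key := (gdiff_le x y).trans (tsum_min_le' (by positivity))
      calc |g x - g y| ≤ 4 := key
        _ ≤ (4 * Real.pi + 4) * s := by nlinarith
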